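/- arXiv:2201.09940 — 2 statements merged into one kernel-verified Lean document; each statement's English description precedes it below -/
import Mathlib

section
/- Suppose there exist C, t > 0 such that for all d ∈ ℕ, C·e^{2t(1+ln d)} ≥ (1−e^{-2}) ∏_{j=1}^d (1+2ζ(α)γ_j), where α>1 and 1 ≥ γ_1 ≥ γ_2 ≥ ⋯ > 0. Then lim_{j→∞} γ_j = 0 and limsup_{d→∞} (1/ln(d+1)) Σ_{j=1}^d γ_j < ∞. -/
/-!
Taking logarithms, Bernoulli's inequality `(1 + c) ^ x ≤ 1 + c x` for `x ∈ [0, 1]` gives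
`log (1 + 2ζ(α)) · ∑_{j<d} γ_j ≤ log ∏_{j<d} (1 + 2ζ(α) γ_j) = O(log d)`.
For an antitone sequence the partial sums dominate `(j + 1) γ_j`, so `γ_j = O(log j / j) → 0`.
-/

noncomputable def zetaR (α : ℝ) : ℝ := ∑' n : ℕ, 1 / ((n : ℝ) + 1) ^ α

open Filter

open Finset Real

theorem one_le_zetaR {α : ℝ} (hα : 1 < α) : 1 ≤ zetaR α := by
  have hsum : Summable fun n : ℕ => 1 / ((n : ℝ) + 1) ^ α := by
    simpa using (summable_nat_add_iff 1).mpr (summable_one_div_nat_rpow.mpr hα)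
  simpa [zetaR] using hsum.le_tsum 0 fun j _ => by positivity

theorem pos_one_add_mul_of_mem_Icc {c x : ℝ} (hc : -1 < c) (hx : x ∈ Set.Icc (0 : ℝ) 1) :
    0 < 1 + c * x := by
  rw [mul_comm]
  exact (rpow_pos_of_pos (by linarith) x).trans_le
    (rpow_one_add_le_one_add_mul_self hc.le hx.1 hx.2)

theorem mul_log_one_add_le_log_one_add_mul {c x : ℝ} (hc : -1 < c) (hx : x ∈ Set.Icc (0 : ℝ) 1) :
    x * log (1 + c) ≤ log (1 + c * x) := by
  have hbern := rpow_one_add_le_one_add_mul_self hc.le hx.1 hx.2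
  rw [← log_rpow (by linarith)]
  exact log_le_log (rpow_pos_of_pos (by linarith) x) (mul_comm c x ▸ hbern)

theorem log_one_add_mul_sum_le_log_prod {ι : Type*} (s : Finset ι) {c : ℝ} (hc : -1 < c)
    {x : ι → ℝ} (hx : ∀ i ∈ s, x i ∈ Set.Icc (0 : ℝ) 1) :
    log (1 + c) * ∑ i ∈ s, x i ≤ log (∏ i ∈ s, (1 + c * x i)) := by
  rw [log_prod fun i hi => (pos_one_add_mul_of_mem_Icc hc (hx i hi)).ne', mul_sum]
  exact sum_le_sum fun i hi => mul_comm (log (1 + c)) (x i) ▸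
    mul_log_one_add_le_log_one_add_mul hc (hx i hi)

theorem exists_forall_le_mul_log_add_one {f : ℕ → ℝ} {a b : ℝ} (hb : 0 ≤ b) (h0 : f 0 ≤ 0)
    (hf : ∀ d : ℕ, 1 ≤ d → f d ≤ a + b * log d) :
    ∃ B, ∀ d : ℕ, f d ≤ B * log (d + 1) := by
  have hlog2 : 0 < log 2 := log_pos one_lt_two
  refine ⟨max a 0 / log 2 + b, fun d => ?_⟩
  rcases Nat.eq_zero_or_pos d with rfl | hd
  · simpa using h0
  have hd1 : (1 : ℝ) ≤ d := by exact_mod_cast hd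
  have ha : a ≤ max a 0 / log 2 * log (d + 1) :=
    calc a ≤ max a 0 / log 2 * log 2 := by
          rw [div_mul_cancel₀ _ hlog2.ne']; exact le_max_left _ _
      _ ≤ max a 0 / log 2 * log (d + 1) := by
        gcongr
        linarith
  have hb' : b * log d ≤ b * log (d + 1) := by gcongr; linarith
  linarith [hf d hd]

theorem Antitone.tendsto_zero_of_sum_range_le_mul_log {γ : ℕ → ℝ} (hmono : Antitone γ)
    (hγ : ∀ j, 0 ≤ γ j) {B : ℝ} (hB : ∀ d : ℕ, ∑ j ∈ range d, γ j ≤ B * log (d + 1)) :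
    Tendsto γ atTop (nhds 0) := by
  have hmul : ∀ j : ℕ, (j + 1) * γ j ≤ B * log (j + 2) := fun j => by
    have hle : (j + 1) • γ j ≤ ∑ k ∈ range (j + 1), γ k := by
      simpa using card_nsmul_le_sum (range (j + 1)) γ (γ j) fun k hk =>
        hmono (Nat.lt_succ_iff.mp (mem_range.mp hk))
    have hpartial := hB (j + 1)
    push_cast [nsmul_eq_mul] at hle hpartial
    rw [add_assoc, one_add_one_eq_two] at hpartial
    linarith
  have hbound : ∀ j : ℕ, γ j ≤ 2 * B * (log (j + 2) / (j + 2)) := fun j => by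
    rw [← mul_div_assoc, le_div_iff₀ (by positivity)]
    nlinarith [hmul j, hγ j]
  have hlim : Tendsto (fun j : ℕ => 2 * B * (log (j + 2) / (j + 2))) atTop (nhds 0) := by
    have := (tendsto_pow_log_div_mul_add_atTop 1 0 1 one_ne_zero).comp
      (tendsto_atTop_add_const_right _ 2 tendsto_natCast_atTop_atTop)
    simpa using this.const_mul (2 * B)
  exact squeeze_zero hγ hbound hlim

/-- If `C e^{2t(1+ln d)} ≥ (1-e^{-2}) ∏_{j=1}^d (1+2ζ(α)γ_j)` for all `d ≥ 1`, then
`γ_j → 0` and `limsup_d (1/ln(d+1)) Σ_{j=1}^d γ_j < ∞`. -/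
theorem stmt7 (α : ℝ) (hα : 1 < α) (γ : ℕ → ℝ) (hmono : Antitone γ)
    (hγ : ∀ j, γ j ∈ Set.Ioc (0 : ℝ) 1) (C t : ℝ) (hC : 0 < C) (ht : 0 < t)
    (h : ∀ d : ℕ, 1 ≤ d →
      (1 - Real.exp (-2)) * ∏ j ∈ Finset.range d, (1 + 2 * zetaR α * γ j) ≤
        C * Real.exp (2 * t * (1 + Real.log d))) :
    Tendsto γ atTop (nhds 0) ∧
      ∃ B : ℝ, ∀ d : ℕ, (∑ j ∈ Finset.range d, γ j) ≤ B * Real.log ((d : ℝ) + 1) := by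
  have hc : -1 < 2 * zetaR α := by linarith [one_le_zetaR hα]
  have hK : 0 < log (1 + 2 * zetaR α) := log_pos (by linarith [one_le_zetaR hα])
  have hγ' : ∀ j, γ j ∈ Set.Icc (0 : ℝ) 1 := fun j => Set.Ioc_subset_Icc_self (hγ j)
  have hE : 0 < 1 - exp (-2) := sub_pos.mpr (exp_lt_one_iff.mpr (by norm_num))
  have hlog : ∀ d : ℕ, 1 ≤ d → log (1 + 2 * zetaR α) * ∑ j ∈ range d, γ j ≤
      (log C - log (1 - exp (-2)) + 2 * t) + 2 * t * log d := fun d hd =>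
    calc log (1 + 2 * zetaR α) * ∑ j ∈ range d, γ j
        ≤ log (∏ j ∈ range d, (1 + 2 * zetaR α * γ j)) :=
          log_one_add_mul_sum_le_log_prod _ hc fun j _ => hγ' j
      _ ≤ log (C * exp (2 * t * (1 + log d)) / (1 - exp (-2))) :=
          log_le_log (prod_pos fun j _ => pos_one_add_mul_of_mem_Icc hc (hγ' j))
            (by rw [le_div_iff₀ hE, mul_comm]; exact h d hd)
      _ = (log C - log (1 - exp (-2)) + 2 * t) + 2 * t * log d := by
          rw [log_div (by positivity) hE.ne', log_mul hC.ne' (exp_ne_zero _), log_exp]; ring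
  obtain ⟨B, hB⟩ := exists_forall_le_mul_log_add_one (by positivity) (by simp) hlog
  have hsum : ∀ d : ℕ, ∑ j ∈ range d, γ j ≤ B / log (1 + 2 * zetaR α) * log (d + 1) := fun d => by
    rw [div_mul_eq_mul_div, le_div_iff₀ hK, mul_comm]
    exact hB d
  exact ⟨hmono.tendsto_zero_of_sum_range_le_mul_log (fun j => (hγ j).1.le) hsum, _, hsum⟩
end

section
/- Let σ ∈ (0,1], α > 1, λ ∈ (1/2, α/2), and (γ_j) ⊂ (0,1] with lim_{d→∞} d^{-σ} Σ_{j=1}^d γ_j^{1/(2λ)} = 0. Define n(ε,d) as any function satisfying n(ε,d) ≤ 4·( (√2/ε) ∏_{j=1}^d (1 + 2^{2α+1} γ_j^{1/(2λ)} ζ(α/(2λ)))^{2λ} )^{(4λ−1)/(λ(2λ−1))}. Then for all τ > 0, lim_{d+1/ε→∞} ln n(ε,d)/(d^σ + ε^{-τ}) = 0. -/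
open Filter

/-
Since `log (1 + x) ≤ x`, the logarithm of the bound on `n(ε,d)` is at most
`const + C log ε⁻¹ + K Σ_{j<d} γ_j^{1/(2λ)}` with `C = (4λ-1)/(λ(2λ-1))`. The first variable term
is `o(ε^{-τ})` because `log` grows slower than any power, and the second is `o(d^σ)` by hypothesis.
What remains is a constant, which `δ (d^σ + ε^{-τ})` eventually exceeds as `d + 1/ε → ∞`.
-/

open Real Finset

theorem zetaR_nonneg (α : ℝ) : 0 ≤ zetaR α := tsum_nonneg fun _ => by positivity

theorem log_prod_one_add_rpow_le {ι : Type*} (s : Finset ι) {x : ι → ℝ}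
    (hx : ∀ j ∈ s, 0 ≤ x j) {p : ℝ} (hp : 0 ≤ p) :
    log (∏ j ∈ s, (1 + x j) ^ p) ≤ p * ∑ j ∈ s, x j := by
  have hpos : ∀ j ∈ s, 0 < 1 + x j := fun j hj => by linarith [hx j hj]
  rw [log_prod fun j hj => (rpow_pos_of_pos (hpos j hj) p).ne', mul_sum]
  refine sum_le_sum fun j hj => ?_
  rw [log_rpow (hpos j hj)]
  exact mul_le_mul_of_nonneg_left (by linarith [log_le_sub_one_of_pos (hpos j hj)]) hp

theorem log_le_of_le_mul_rpow {N a b P C : ℝ} (hN : 0 ≤ N) (ha : 1 ≤ a) (hb : 1 ≤ b)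
    (hP : 1 ≤ P) (hC : 0 ≤ C) (h : N ≤ a * (b * P) ^ C) :
    log N ≤ log a + C * (log b + log P) := by
  have hbP : 1 ≤ b * P := one_le_mul_of_one_le_of_one_le hb hP
  have hR : 1 ≤ a * (b * P) ^ C := one_le_mul_of_one_le_of_one_le ha (one_le_rpow hbP hC)
  have hlogN : log N ≤ log (a * (b * P) ^ C) := by
    rcases hN.eq_or_lt with rfl | hN
    · simpa using log_nonneg hR
    · exact log_le_log hN h
  rwa [log_mul (by positivity) (by positivity), log_rpow (by positivity),
    log_mul (by positivity) (by positivity)] at hlogN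

theorem exists_mul_log_le_add_mul_rpow {c τ η : ℝ} (hc : 0 ≤ c) (hτ : 0 < τ) (hη : 0 < η) :
    ∃ A, ∀ x, 0 < x → c * log x ≤ A + η * x ^ τ := by
  set t := (τ * η / (c + 1)) ^ τ⁻¹
  have ht : 0 < t := by positivity
  have htτ : t ^ τ = τ * η / (c + 1) := rpow_inv_rpow (by positivity) hτ.ne'
  refine ⟨-c * log t, fun x hx => ?_⟩
  -- `t` is chosen so that `log y ≤ y ^ τ / τ` at `y = t * x` yields the coefficient `η / (c + 1)`
  have hlog : log t + log x ≤ η / (c + 1) * x ^ τ := by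
    have := log_le_rpow_div (mul_pos ht hx).le hτ
    rwa [log_mul ht.ne' hx.ne', mul_rpow ht.le hx.le, htτ,
      show τ * η / (c + 1) * x ^ τ / τ = η / (c + 1) * x ^ τ by field_simp] at this
  have hcoef : c * (η / (c + 1)) ≤ η := by
    rw [mul_div_assoc', div_le_iff₀ (by linarith)]; linarith
  have hxτ : 0 ≤ x ^ τ := rpow_nonneg hx.le τ
  linarith [mul_le_mul_of_nonneg_left hlog hc, mul_le_mul_of_nonneg_right hcoef hxτ]

theorem exists_le_add_mul_of_tendsto_div {u v : ℕ → ℝ} (hv : ∀ d, 0 ≤ v d)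
    (hv' : ∀ᶠ d in atTop, 0 < v d) (h : Tendsto (fun d => u d / v d) atTop (nhds 0))
    {η : ℝ} (hη : 0 < η) : ∃ A, ∀ d, u d ≤ A + η * v d := by
  obtain ⟨N, hN⟩ := eventually_atTop.1 (hv'.and (h.eventually (gt_mem_nhds hη)))
  have hA : 0 ≤ ∑ d ∈ range N, |u d| := sum_nonneg fun d _ => abs_nonneg (u d)
  refine ⟨∑ d ∈ range N, |u d|, fun d => ?_⟩
  have hηv : 0 ≤ η * v d := mul_nonneg hη.le (hv d)
  rcases lt_or_ge d N with hd | hd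
  · have : |u d| ≤ ∑ d ∈ range N, |u d| :=
      single_le_sum (fun d _ => abs_nonneg (u d)) (mem_range.2 hd)
    linarith [le_abs_self (u d)]
  · obtain ⟨hvd, hratio⟩ := hN d hd
    linarith [(div_lt_iff₀ hvd).1 hratio]

theorem exists_lt_mul_rpow_add_rpow {σ τ δ : ℝ} (hσ : 0 < σ) (hτ : 0 < τ) (hδ : 0 < δ)
    (A : ℝ) : ∃ M, ∀ x y : ℝ, 0 ≤ x → 0 ≤ y → M ≤ x + y → A < δ * (x ^ σ + y ^ τ) := by
  set B := |A| / δ + 1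
  have hB : 0 ≤ B := by positivity
  have hAB : A < δ * B := by
    rw [mul_add, mul_div_cancel₀ _ hδ.ne']; linarith [le_abs_self A]
  refine ⟨B ^ σ⁻¹ + B ^ τ⁻¹, fun x y hx hy hxy => hAB.trans_le ?_⟩
  refine mul_le_mul_of_nonneg_left ?_ hδ.le
  have hxσ : 0 ≤ x ^ σ := rpow_nonneg hx σ
  have hyτ : 0 ≤ y ^ τ := rpow_nonneg hy τ
  rcases le_or_gt (B ^ σ⁻¹) x with h | h
  · have : B ≤ x ^ σ := by
      simpa [rpow_inv_rpow hB hσ.ne'] using rpow_le_rpow (by positivity) h hσ.le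
    linarith
  · have : B ≤ y ^ τ := by
      simpa [rpow_inv_rpow hB hτ.ne'] using
        rpow_le_rpow (by positivity) (by linarith : B ^ τ⁻¹ ≤ y) hτ.le
    linarith

theorem tractabilityExponent_nonneg {lam : ℝ} (hlam : 1 / 2 < lam) :
    0 ≤ (4 * lam - 1) / (lam * (2 * lam - 1)) :=
  div_nonneg (by linarith) (mul_nonneg (by linarith) (by linarith))

theorem log_le_of_le_mul_prod_one_add_rpow {ι : Type*} (s : Finset ι) {N a b C p : ℝ}
    {x : ι → ℝ} (hN : 0 ≤ N) (ha : 1 ≤ a) (hb : 1 ≤ b) (hC : 0 ≤ C)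
    (hx : ∀ j ∈ s, 0 ≤ x j) (hp : 0 ≤ p) (h : N ≤ a * (b * ∏ j ∈ s, (1 + x j) ^ p) ^ C) :
    log N ≤ log a + C * log b + C * p * ∑ j ∈ s, x j := by
  have hP : 1 ≤ ∏ j ∈ s, (1 + x j) ^ p :=
    one_le_prod fun j hj => one_le_rpow (by linarith [hx j hj]) hp
  have := log_le_of_le_mul_rpow hN ha hb hP hC h
  linarith [mul_le_mul_of_nonneg_left (log_prod_one_add_rpow_le s hx hp) hC]

theorem log_le_of_le_spline_bound {N ε α lam : ℝ} {γ : ℕ → ℝ} (d : ℕ) (hN : 0 ≤ N)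
    (hε : ε ∈ Set.Ioo (0 : ℝ) 1) (hlam : 1 / 2 < lam) (hγ : ∀ j, 0 ≤ γ j)
    (h : N ≤ 4 * ((√2 / ε) * ∏ j ∈ range d,
      (1 + 2 ^ (2 * α + 1) * γ j ^ (1 / (2 * lam)) * zetaR (α / (2 * lam))) ^ (2 * lam))
        ^ ((4 * lam - 1) / (lam * (2 * lam - 1)))) :
    log N ≤ log 4 + (4 * lam - 1) / (lam * (2 * lam - 1)) * log √2
      + (4 * lam - 1) / (lam * (2 * lam - 1)) * log ε⁻¹
      + (4 * lam - 1) / (lam * (2 * lam - 1)) * (2 * lam)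
        * (2 ^ (2 * α + 1) * zetaR (α / (2 * lam))) * ∑ j ∈ range d, γ j ^ (1 / (2 * lam)) := by
  have hb : 1 ≤ √2 / ε := (one_le_div hε.1).2 (hε.2.le.trans (one_le_sqrt.2 (by norm_num)))
  have hx : ∀ j ∈ range d, 0 ≤ 2 ^ (2 * α + 1) * γ j ^ (1 / (2 * lam)) * zetaR (α / (2 * lam)) :=
    fun j _ => mul_nonneg (mul_nonneg (by positivity) (rpow_nonneg (hγ j) _)) (zetaR_nonneg _)
  have := log_le_of_le_mul_prod_one_add_rpow (range d) hN (by norm_num) hb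
    (tractabilityExponent_nonneg hlam) hx (by linarith) h
  have hsum : ∑ j ∈ range d, 2 ^ (2 * α + 1) * γ j ^ (1 / (2 * lam)) * zetaR (α / (2 * lam))
      = 2 ^ (2 * α + 1) * zetaR (α / (2 * lam)) * ∑ j ∈ range d, γ j ^ (1 / (2 * lam)) := by
    rw [mul_sum]; exact sum_congr rfl fun j _ => by ring
  rw [log_div (by positivity) hε.1.ne', hsum] at this
  rw [log_inv]
  linarith

theorem stmt16_general (σ α lam : ℝ) (hσ : σ ∈ Set.Ioc (0 : ℝ) 1)
    (hlam : lam ∈ Set.Ioo (1 / 2 : ℝ) (α / 2)) (γ : ℕ → ℝ)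
    (hγ : ∀ j, γ j ∈ Set.Ioc (0 : ℝ) 1)
    (hlim : Tendsto (fun d : ℕ =>
        (∑ j ∈ Finset.range d, γ j ^ (1 / (2 * lam))) / (d : ℝ) ^ σ) atTop (nhds 0))
    (n : ℝ → ℕ → ℕ)
    (hup : ∀ ε ∈ Set.Ioo (0 : ℝ) 1, ∀ d : ℕ,
      (n ε d : ℝ) ≤ 4 * ((Real.sqrt 2 / ε) *
          ∏ j ∈ Finset.range d,
            (1 + 2 ^ (2 * α + 1) * γ j ^ (1 / (2 * lam)) * zetaR (α / (2 * lam)))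
              ^ (2 * lam)) ^ ((4 * lam - 1) / (lam * (2 * lam - 1)))) :
    ∀ τ : ℝ, 0 < τ → ∀ δ : ℝ, 0 < δ → ∃ M : ℝ, ∀ ε ∈ Set.Ioo (0 : ℝ) 1, ∀ d : ℕ,
      M ≤ (d : ℝ) + 1 / ε →
        Real.log (n ε d) < δ * ((d : ℝ) ^ σ + ε ^ (-τ)) := by
  intro τ hτ δ hδ
  set C := (4 * lam - 1) / (lam * (2 * lam - 1))
  set K := C * (2 * lam) * (2 ^ (2 * α + 1) * zetaR (α / (2 * lam)))
  obtain ⟨A₁, hA₁⟩ := exists_mul_log_le_add_mul_rpow (tractabilityExponent_nonneg hlam.1) hτ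
    (by positivity : 0 < δ / 4)
  obtain ⟨A₂, hA₂⟩ := exists_le_add_mul_of_tendsto_div
    (u := fun d => K * ∑ j ∈ range d, γ j ^ (1 / (2 * lam)))
    (fun d => rpow_nonneg d.cast_nonneg σ)
    ((eventually_gt_atTop 0).mono fun d hd => rpow_pos_of_pos (Nat.cast_pos.2 hd) σ)
    (by simpa only [mul_div_assoc, mul_zero] using hlim.const_mul K)
    (by positivity : 0 < δ / 4)
  obtain ⟨M, hM⟩ := exists_lt_mul_rpow_add_rpow hσ.1 hτ (by positivity : 0 < δ / 2)
    (log 4 + C * log √2 + A₁ + A₂)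
  refine ⟨M, fun ε hε d hd => ?_⟩
  have hlog := log_le_of_le_spline_bound d (n ε d).cast_nonneg hε hlam.1
    (fun j => (hγ j).1.le) (hup ε hε d)
  have hM' := hM d ε⁻¹ d.cast_nonneg (inv_nonneg.2 hε.1.le) (by rwa [← one_div])
  have hA₁' := hA₁ ε⁻¹ (inv_pos.2 hε.1)
  have hA₂' : K * ∑ j ∈ range d, γ j ^ (1 / (2 * lam)) ≤ A₂ + δ / 4 * (d : ℝ) ^ σ := hA₂ d
  have hS : 0 ≤ (d : ℝ) ^ σ + ε⁻¹ ^ τ :=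
    add_nonneg (rpow_nonneg d.cast_nonneg σ) (rpow_nonneg (inv_nonneg.2 hε.1.le) τ)
  rw [rpow_neg hε.1.le, ← inv_rpow hε.1.le]
  linarith [mul_nonneg hδ.le hS]

/-- If `d^{-σ} Σ_{j=1}^d γ_j^{1/(2λ)} → 0` and `n(ε,d)` satisfies the upper bound coming
from the spline algorithm of Zeng, Kritzer and Hickernell, then for every `τ > 0` the
problem is `(σ,τ)`-weakly tractable. -/
theorem stmt16 (σ α lam : ℝ) (hσ : σ ∈ Set.Ioc (0 : ℝ) 1) (hα : 1 < α)
    (hlam : lam ∈ Set.Ioo (1 / 2 : ℝ) (α / 2)) (γ : ℕ → ℝ)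
    (hγ : ∀ j, γ j ∈ Set.Ioc (0 : ℝ) 1)
    (hlim : Tendsto (fun d : ℕ =>
        (∑ j ∈ Finset.range d, γ j ^ (1 / (2 * lam))) / (d : ℝ) ^ σ) atTop (nhds 0))
    (n : ℝ → ℕ → ℕ)
    (hup : ∀ ε ∈ Set.Ioo (0 : ℝ) 1, ∀ d : ℕ,
      (n ε d : ℝ) ≤ 4 * ((Real.sqrt 2 / ε) *
          ∏ j ∈ Finset.range d,
            (1 + 2 ^ (2 * α + 1) * γ j ^ (1 / (2 * lam)) * zetaR (α / (2 * lam)))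
              ^ (2 * lam)) ^ ((4 * lam - 1) / (lam * (2 * lam - 1)))) :
    ∀ τ : ℝ, 0 < τ → ∀ δ : ℝ, 0 < δ → ∃ M : ℝ, ∀ ε ∈ Set.Ioo (0 : ℝ) 1, ∀ d : ℕ,
      M ≤ (d : ℝ) + 1 / ε →
        Real.log (n ε d) < δ * ((d : ℝ) ^ σ + ε ^ (-τ)) :=
  stmt16_general σ α lam hσ hlam γ hγ hlim n hup
end
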